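/- For any seed digit d ∈ {1,2,4,6}, every term T_n of the look-and-say-again sequence with n ≥ 1 satisfies: every run of T_n has base digit in {1,2,4,6} and run length in {2,4,6}. -/

import Mathlib

/-- Run-length encoding of a digit string (a list of digits). -/
def rle : List ℕ → List (ℕ × ℕ)
  | [] => []
  | a :: t =>
    match rle t with
    | [] => [(a, 1)]
    | (b, n) :: r => if a = b then (a, n + 1) :: r else (a, 1) :: (b, n) :: r

/-- `P` is a run-length representation of the digit string `S`:
multiplicities are positive, adjacent base digits are distinct, and `S` is
the concatenation of the runs. -/
def IsRLE (S : List ℕ) (P : List (ℕ × ℕ)) : Prop :=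
  (∀ p ∈ P, 1 ≤ p.2) ∧ List.Chain' (fun p q => p.1 ≠ q.1) P ∧
    S = (P.map fun p => List.replicate p.2 p.1).flatten

/-- The look-and-say-again step: each run `a^n` is read off as `n n a a`. -/
def lsa (T : List ℕ) : List ℕ := (rle T).flatMap fun p => [p.2, p.2, p.1, p.1]

/-- Property `P`: every run has base digit in `{1,2,4,6}` and length in `{2,4,6}`. -/
def propP (T : List ℕ) : Prop :=
  ∀ p ∈ rle T, p.1 ∈ ({1, 2, 4, 6} : Set ℕ) ∧ p.2 ∈ ({2, 4, 6} : Set ℕ)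

/-!
`lsa T` is the word `n₁ a₁ n₂ a₂ … n_k a_k` read off from the runs `a_i ^ n_i` of `T`, with every
letter doubled, so its runs are those of that word with doubled lengths. Since consecutive base
digits `a_i ≠ a_{i+1}` differ, the word has no run longer than `3`, and its letters are digits and
counts of `T`. Hence, if all digits and counts of `T` lie in `{1,2,4,6}`, then `lsa T` has property
`P`; since `{2,4,6} ⊆ {1,2,4,6}` and the seed is the single run `d ^ 1`, induction applies.
-/

theorem rle_cons_of_rle_eq_cons {x y k : ℕ} {t : List ℕ} {r : List (ℕ × ℕ)}
    (h : rle t = (y, k) :: r) :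
    rle (x :: t) = if x = y then (x, k + 1) :: r else (x, 1) :: (y, k) :: r := by
  simp only [rle, h]

theorem isRLE_rle : ∀ S : List ℕ, IsRLE S (rle S)
  | [] => by simp [IsRLE, rle, List.Chain']
  | a :: t => by
    obtain ⟨hpos, hchain, hflat⟩ := isRLE_rle t
    rcases h : rle t with _ | ⟨⟨y, k⟩, r⟩
    · rw [h] at hflat
      simp [IsRLE, rle, hflat, List.Chain']
    rw [h] at hpos hchain hflat
    rw [rle_cons_of_rle_eq_cons h]
    split_ifs with hay
    · subst hay
      refine ⟨?_, ?_, by simp [hflat, List.replicate_succ]⟩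
      · simpa using (List.forall_mem_cons.mp hpos).2
      · cases r with
        | nil => exact List.isChain_singleton _
        | cons q r => exact List.isChain_cons_cons.mpr (List.isChain_cons_cons.mp hchain)
    · refine ⟨?_, List.isChain_cons_cons.mpr ⟨hay, hchain⟩, by simp [hflat]⟩
      simpa using hpos

theorem IsRLE.fst_mem {S : List ℕ} {P : List (ℕ × ℕ)} (h : IsRLE S P) {p : ℕ × ℕ} (hp : p ∈ P) :
    p.1 ∈ S := by
  rw [h.2.2, List.mem_flatten]
  exact ⟨_, List.mem_map_of_mem hp, List.mem_replicate.mpr ⟨by have := h.1 p hp; omega, rfl⟩⟩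

theorem rle_flatMap_double :
    ∀ w : List ℕ, rle (w.flatMap fun x => [x, x]) = (rle w).map fun p => (p.1, 2 * p.2)
  | [] => rfl
  | x :: t => by
    have ih := rle_flatMap_double t
    rcases h : rle t with _ | ⟨⟨y, k⟩, r⟩
    · rw [h] at ih
      have ht : t = [] := by simpa [h] using (isRLE_rle t).2.2
      simp [ht, rle]
    rw [h, List.map_cons] at ih
    have h1 := rle_cons_of_rle_eq_cons (x := x) ih
    simp only [List.flatMap_cons, List.cons_append, List.nil_append]
    rw [rle_cons_of_rle_eq_cons (x := x) h]
    split_ifs at h1 ⊢ with hxy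
    · rw [rle_cons_of_rle_eq_cons h1]; simp; ring
    · rw [rle_cons_of_rle_eq_cons h1]; simp

def readOff (L : List (ℕ × ℕ)) : List ℕ := L.flatMap fun p => [p.2, p.1]

theorem lsa_eq_flatMap_readOff (T : List ℕ) :
    lsa T = (readOff (rle T)).flatMap fun x => [x, x] := by
  simp [lsa, readOff, List.flatMap_assoc]

theorem rle_readOff_cons (a n : ℕ) :
    ∀ L : List (ℕ × ℕ), List.IsChain (fun p q => p.1 ≠ q.1) ((a, n) :: L) →
      ∃ c r, rle (readOff ((a, n) :: L)) = (n, c) :: r ∧ (n ≠ a → c = 1) ∧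
        ∀ p ∈ (n, c) :: r, p.2 ≤ 3
  | [], _ => by
    by_cases hna : n = a
    · subst hna; exact ⟨2, [], by simp [readOff, rle], by simp, by simp⟩
    · exact ⟨1, [(a, 1)], by simp [readOff, rle, hna], by simp, by simp⟩
  | (b, m) :: L, hchain => by
    obtain ⟨hab, hchain⟩ := List.isChain_cons_cons.mp hchain
    obtain ⟨c, r, hrle, hc, hle⟩ := rle_readOff_cons b m L hchain
    rw [List.forall_mem_cons] at hle
    have hdigit : ∃ c₁ r₁, rle (a :: readOff ((b, m) :: L)) = (a, c₁) :: r₁ ∧ c₁ ≤ 2 ∧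
        ∀ p ∈ r₁, p.2 ≤ 3 := by
      by_cases ham : a = m
      · -- then `m ≠ b`, so the run of `m` has length `1`
        subst ham
        refine ⟨2, r, ?_, le_rfl, hle.2⟩
        rw [rle_cons_of_rle_eq_cons hrle, if_pos rfl, hc hab]
      · refine ⟨1, (m, c) :: r, ?_, by omega, List.forall_mem_cons.mpr hle⟩
        rw [rle_cons_of_rle_eq_cons hrle, if_neg ham]
    obtain ⟨c₁, r₁, hrle₁, hc₁, hle₁⟩ := hdigit
    have hread : readOff ((a, n) :: (b, m) :: L) = n :: a :: readOff ((b, m) :: L) := rfl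
    rw [hread, rle_cons_of_rle_eq_cons hrle₁]
    split_ifs with hna
    · subst hna
      exact ⟨c₁ + 1, r₁, rfl, absurd rfl, List.forall_mem_cons.mpr ⟨by omega, hle₁⟩⟩
    · exact ⟨1, (a, c₁) :: r₁, rfl, fun _ => rfl, List.forall_mem_cons.mpr ⟨by norm_num,
        List.forall_mem_cons.mpr ⟨by dsimp; omega, hle₁⟩⟩⟩

theorem le_three_of_mem_rle_readOff {L : List (ℕ × ℕ)}
    (hL : List.IsChain (fun p q => p.1 ≠ q.1) L) {p : ℕ × ℕ} (hp : p ∈ rle (readOff L)) :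
    p.2 ≤ 3 := by
  rcases L with _ | ⟨⟨a, n⟩, L⟩
  · simp [readOff, rle] at hp
  · obtain ⟨c, r, hrle, -, hle⟩ := rle_readOff_cons a n L hL
    exact hle p (hrle ▸ hp)

theorem propP_lsa {T : List ℕ}
    (hT : ∀ p ∈ rle T, p.1 ∈ ({1, 2, 4, 6} : Set ℕ) ∧ p.2 ∈ ({1, 2, 4, 6} : Set ℕ)) :
    propP (lsa T) := by
  intro p hp
  rw [lsa_eq_flatMap_readOff, rle_flatMap_double, List.mem_map] at hp
  obtain ⟨q, hq, rfl⟩ := hp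
  have hpos : 1 ≤ q.2 := (isRLE_rle _).1 q hq
  have hle : q.2 ≤ 3 := le_three_of_mem_rle_readOff (isRLE_rle T).2.1 hq
  obtain ⟨s, hs, hqs⟩ : ∃ s ∈ rle T, q.1 = s.2 ∨ q.1 = s.1 := by
    simpa [readOff] using (isRLE_rle _).fst_mem hq
  refine ⟨?_, ?_⟩
  · rcases hqs with h | h <;> rw [h]
    exacts [(hT s hs).2, (hT s hs).1]
  · interval_cases q.2 <;> simp

/-- For seeds in `{1,2,4,6}`, every term of the look-and-say-again sequence from
index 1 on satisfies property `P`. -/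
theorem propP_lsa_seq (d : ℕ) (hd : d ∈ ({1, 2, 4, 6} : Set ℕ)) :
    ∀ n : ℕ, 1 ≤ n → propP (lsa^[n] [d]) := by
  intro n hn
  induction n, hn using Nat.le_induction with
  | base => exact propP_lsa (by simpa [rle] using hd)
  | succ k _ ih =>
    rw [Function.iterate_succ_apply']
    refine propP_lsa fun p hp => ⟨(ih p hp).1, ?_⟩
    rcases (ih p hp).2 with h | h | h <;> simp [h]
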